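/- In the four-point market example, there exists a > 0 such that ρ(f_a; 1) ≠ ρ(f_a; 2), where f_a(ω₁)=f_a(ω₂)=0, f_a(ω₃)=f_a(ω₄)=a, and ρ(f_a; i) = sup_{ν ∈ (-1/6,1/3)} (-a(1/3-ν) - h_i(ν)) with h_i(ν) = h̄_i(ν) - inf h̄_i. -/
import Mathlib


noncomputable def Pvec : Fin 4 → ℝ := ![1/3, 1/3, 1/9, 2/9]

noncomputable def Qvec (ν : ℝ) : Fin 4 → ℝ :=
  ![1/3 - ν, 1/3 + 2*ν, (1/3 - ν)/2, (1/3 - ν)/2]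

noncomputable def h2bar (ν : ℝ) : ℝ := ∑ i, Qvec ν i * Real.log (Qvec ν i / Pvec i)

noncomputable def h1bar (ν : ℝ) : ℝ :=
  Qvec ν 0 * Real.log (Qvec ν 0 / Pvec 0) + Qvec ν 1 * Real.log (Qvec ν 1 / Pvec 1)
    + (1/3 - ν) * Real.log (3 * (1/3 - ν))

noncomputable def h1 (ν : ℝ) : ℝ := h1bar ν - sInf (h1bar '' Set.Ioo (-(1:ℝ)/6) (1/3))

noncomputable def h2 (ν : ℝ) : ℝ := h2bar ν - sInf (h2bar '' Set.Ioo (-(1:ℝ)/6) (1/3))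

/-! ### Auxiliary log inequalities -/

lemma aux_log_ge {t : ℝ} (ht : 0 < t) : 1 - 1/t ≤ Real.log t := by
  have h := Real.log_le_sub_one_of_pos (x := 1/t) (by positivity)
  rw [Real.log_div one_ne_zero (ne_of_gt ht), Real.log_one] at h
  linarith

lemma aux_mul_log_ge {t : ℝ} (ht : 0 < t) : t - 1 ≤ t * Real.log t := by
  have h := aux_log_ge ht
  have h2 : t * (1 - 1/t) ≤ t * Real.log t := mul_le_mul_of_nonneg_left h ht.le
  have ht' : t * (1 - 1/t) = t - 1 := by field_simp
  linarith

lemma aux_mul_log_ge_sqrt {t : ℝ} (ht : 0 < t) : 2*t - 2*Real.sqrt t ≤ t * Real.log t := by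
  have hs : 0 < Real.sqrt t := Real.sqrt_pos.mpr ht
  have h := aux_log_ge hs
  rw [Real.log_sqrt ht.le] at h
  have h2 : t * (1 - 1/Real.sqrt t) ≤ t * (Real.log t / 2) :=
    mul_le_mul_of_nonneg_left h ht.le
  have hd : t / Real.sqrt t = Real.sqrt t := Real.div_sqrt
  have e : t * (1 - 1/Real.sqrt t) = t - t / Real.sqrt t := by ring
  rw [e, hd] at h2
  linarith

lemma aux_mul_log_ge_e {t : ℝ} (ht : 0 < t) : -(1/Real.exp 1) ≤ t * Real.log t := by
  have he : (0:ℝ) < Real.exp 1 := Real.exp_pos 1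
  have h := Real.log_le_sub_one_of_pos (x := 1/(t * Real.exp 1)) (by positivity)
  rw [Real.log_div one_ne_zero (by positivity), Real.log_one,
      Real.log_mul (ne_of_gt ht) (ne_of_gt he), Real.log_exp] at h
  have h2 : -Real.log t ≤ 1/(t * Real.exp 1) := by linarith
  have h3 : t * (-Real.log t) ≤ t * (1/(t * Real.exp 1)) :=
    mul_le_mul_of_nonneg_left h2 ht.le
  have h4 : t * (1/(t * Real.exp 1)) = 1/Real.exp 1 := by field_simp
  rw [h4] at h3; linarith

lemma log3_nonneg : (0:ℝ) ≤ Real.log 3 := Real.log_nonneg (by norm_num)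

lemma log3_le_two : Real.log 3 ≤ 2 := by
  have := Real.log_le_sub_one_of_pos (x := (3:ℝ)) (by norm_num); linarith

lemma log3_lt_3half : Real.log 3 < 3/2 := by
  have h4 : Real.log 3 ≤ Real.log 4 := Real.log_le_log (by norm_num) (by norm_num)
  have h2 : Real.log (4:ℝ) = 2 * Real.log 2 := by
    rw [show (4:ℝ) = 2^2 by norm_num, Real.log_pow]; norm_num
  have := Real.log_two_lt_d9
  linarith

/-! ### Formulas for h1bar and h2bar -/

lemma h1bar_formula (ν : ℝ) :
    h1bar ν = 2*((1/3 - ν) * Real.log (3*(1/3 - ν))) + (1/3 + 2*ν) * Real.log (3*(1/3 + 2*ν)) := by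
  unfold h1bar Qvec Pvec
  simp only [Matrix.cons_val_zero, Matrix.cons_val_one, Matrix.head_cons]
  rw [show (1/3 - ν)/(1/3:ℝ) = 3*(1/3 - ν) by ring,
      show (1/3 + 2*ν)/(1/3:ℝ) = 3*(1/3 + 2*ν) by ring]
  ring

lemma h2bar_formula {ν : ℝ} (hν : ν ∈ Set.Ioo (-(1:ℝ)/6) (1/3)) :
    h2bar ν = h1bar ν + (1/3 - ν) * (Real.log (9/8) / 2) := by
  obtain ⟨h1', h2'⟩ := hν
  have hq : (0:ℝ) < 1/3 - ν := by linarith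
  have hq' : (1/3 - ν : ℝ) ≠ 0 := ne_of_gt hq
  unfold h2bar h1bar Qvec Pvec
  rw [Fin.sum_univ_four]
  simp only [Matrix.cons_val_zero, Matrix.cons_val_one, Matrix.head_cons,
    Matrix.cons_val_two, Matrix.tail_cons, Matrix.cons_val_three]
  rw [show ((1/3 - ν)/2)/(1/9:ℝ) = (1/3 - ν) * (9/2) by ring,
      show ((1/3 - ν)/2)/(2/9:ℝ) = (1/3 - ν) * (9/4) by ring,
      show (3:ℝ)*(1/3 - ν) = (1/3 - ν) * 3 by ring]
  rw [Real.log_mul hq' (by norm_num), Real.log_mul hq' (by norm_num),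
      Real.log_mul hq' (by norm_num)]
  have l92 : Real.log (9/2 : ℝ) = Real.log 9 - Real.log 2 := Real.log_div (by norm_num) (by norm_num)
  have l94 : Real.log (9/4 : ℝ) = Real.log 9 - Real.log 4 := Real.log_div (by norm_num) (by norm_num)
  have l98 : Real.log (9/8 : ℝ) = Real.log 9 - Real.log 8 := Real.log_div (by norm_num) (by norm_num)
  have l9 : Real.log (9:ℝ) = 2 * Real.log 3 := by
    rw [show (9:ℝ) = 3^2 by norm_num, Real.log_pow]; norm_num
  have l4 : Real.log (4:ℝ) = 2 * Real.log 2 := by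
    rw [show (4:ℝ) = 2^2 by norm_num, Real.log_pow]; norm_num
  have l8 : Real.log (8:ℝ) = 3 * Real.log 2 := by
    rw [show (8:ℝ) = 2^3 by norm_num, Real.log_pow]; norm_num
  rw [l92, l94, l98, l9, l4, l8]
  ring

/-! ### Bounds -/

lemma h1bar_nonneg {ν : ℝ} (hν : ν ∈ Set.Ioo (-(1:ℝ)/6) (1/3)) : 0 ≤ h1bar ν := by
  obtain ⟨ha, hb⟩ := hν
  have hq : (0:ℝ) < 3*(1/3 - ν) := by linarith
  have hp : (0:ℝ) < 3*(1/3 + 2*ν) := by linarith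
  have h1 := aux_mul_log_ge hq
  have h2 := aux_mul_log_ge hp
  rw [h1bar_formula]
  nlinarith [h1, h2]

lemma h1bar_zero : h1bar 0 = 0 := by
  rw [h1bar_formula]; norm_num

lemma h1bar_le_log3 {ν : ℝ} (hν : ν ∈ Set.Ioo (-(1:ℝ)/6) (1/3)) (h0 : 0 ≤ ν) :
    h1bar ν ≤ Real.log 3 := by
  obtain ⟨ha, hb⟩ := hν
  have hq : (0:ℝ) < 1/3 - ν := by linarith
  have hq1 : 3*(1/3 - ν) ≤ 1 := by linarith
  have hlq : Real.log (3*(1/3 - ν)) ≤ 0 := Real.log_nonpos (by linarith) hq1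
  have hp : (0:ℝ) < 3*(1/3 + 2*ν) := by linarith
  have hp3 : 3*(1/3 + 2*ν) ≤ 3 := by linarith
  have hlp : Real.log (3*(1/3 + 2*ν)) ≤ Real.log 3 := Real.log_le_log hp hp3
  rw [h1bar_formula]
  have hpl : (1/3 + 2*ν) * Real.log (3*(1/3 + 2*ν)) ≤ Real.log 3 := by
    rcases le_or_gt (Real.log (3*(1/3 + 2*ν))) 0 with h | h
    · nlinarith [log3_nonneg]
    · nlinarith
  nlinarith

lemma h2bar_ge {ν : ℝ} (hν : ν ∈ Set.Ioo (-(1:ℝ)/6) (1/3)) : 1/108 ≤ h2bar ν := by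
  have hmem := hν
  obtain ⟨ha, hb⟩ := hν
  have hq : (0:ℝ) < 1/3 - ν := by linarith
  have l98 : (1:ℝ)/9 ≤ Real.log (9/8) := by
    have := aux_log_ge (t := (9/8:ℝ)) (by norm_num); norm_num at this ⊢; linarith
  rw [h2bar_formula hmem]
  rcases le_or_gt ν (1/6) with h | h
  · have h0 := h1bar_nonneg hmem
    nlinarith
  · have hp : (0:ℝ) < 3*(1/3 + 2*ν) := by linarith
    have hp2 : (2:ℝ) ≤ 3*(1/3 + 2*ν) := by linarith
    have hlp : Real.log 2 ≤ Real.log (3*(1/3 + 2*ν)) := Real.log_le_log (by norm_num) hp2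
    have hl2 := Real.log_two_gt_d9
    have hqe : -(1/Real.exp 1) ≤ (3*(1/3 - ν)) * Real.log (3*(1/3 - ν)) :=
      aux_mul_log_ge_e (by linarith)
    have he := Real.exp_one_gt_d9
    have hinv : 1/Real.exp 1 ≤ 1/2.7182818283 :=
      one_div_le_one_div_of_le (by norm_num) he.le
    have hterm : -(2/(3*2.7182818283)) ≤ (1/3 - ν) * Real.log (3*(1/3 - ν)) := by
      have e : (1/3 - ν) * Real.log (3*(1/3 - ν))
          = (1/3) * ((3*(1/3 - ν)) * Real.log (3*(1/3 - ν))) := by ring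
      rw [e]; nlinarith
    have hpterm : (2/3) * Real.log 2 ≤ (1/3 + 2*ν) * Real.log (3*(1/3 + 2*ν)) := by
      have hll : (0:ℝ) ≤ Real.log 2 := by linarith
      nlinarith
    rw [h1bar_formula]
    nlinarith

lemma h1bar_near {ν : ℝ} (hν : ν ∈ Set.Ioo (-(1:ℝ)/6) (1/3)) (hcl : 1/3 - ν < 3/1000000) :
    Real.log 3 - 1/216 ≤ h1bar ν := by
  obtain ⟨ha, hb⟩ := hν
  have hq : (0:ℝ) < 1/3 - ν := by linarith
  have hp : (0:ℝ) < 1/3 + 2*ν := by linarith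
  have hs := aux_mul_log_ge_sqrt (t := 3*(1/3 - ν)) (by linarith)
  have hsb : Real.sqrt (3*(1/3 - ν)) ≤ 3/1000 := by
    have h1 : Real.sqrt (3*(1/3 - ν)) ≤ Real.sqrt (9/1000000) := Real.sqrt_le_sqrt (by linarith)
    have h2 : Real.sqrt ((9:ℝ)/1000000) = 3/1000 := by
      rw [show (9:ℝ)/1000000 = (3/1000)^2 by norm_num, Real.sqrt_sq (by norm_num)]
    linarith
  have hterm1 : (1/3 - ν) * Real.log (3*(1/3 - ν)) ≥ 2*(1/3 - ν) - 2/1000 := by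
    have e : (1/3 - ν) * Real.log (3*(1/3 - ν))
        = (1/3) * ((3*(1/3 - ν)) * Real.log (3*(1/3 - ν))) := by ring
    rw [e]; linarith
  have hlm : Real.log (3*(1/3 + 2*ν)) = Real.log 3 + Real.log (1/3 + 2*ν) :=
    Real.log_mul (by norm_num) (ne_of_gt hp)
  have hpl : (1/3 + 2*ν) * Real.log (1/3 + 2*ν) ≥ (1/3 + 2*ν) - 1 := aux_mul_log_ge hp
  have hql3 : (1/3 - ν) * Real.log 3 ≤ (1/3 - ν) * 2 :=
    mul_le_mul_of_nonneg_left log3_le_two hq.le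
  have hterm2 : (1/3 + 2*ν) * Real.log (3*(1/3 + 2*ν))
      ≥ Real.log 3 - 2*(1/3 - ν)*Real.log 3 - 2*(1/3 - ν) := by
    rw [hlm]
    have e2 : (1/3 + 2*ν) * (Real.log 3 + Real.log (1/3 + 2*ν))
        = Real.log 3 - 2*(1/3 - ν)*Real.log 3 + (1/3 + 2*ν) * Real.log (1/3 + 2*ν) := by ring
    rw [e2]; linarith
  rw [h1bar_formula]
  linarith

/-! ### Infima -/

lemma I1_eq_zero : sInf (h1bar '' Set.Ioo (-(1:ℝ)/6) (1/3)) = 0 := by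
  apply le_antisymm
  · apply csInf_le
    · exact ⟨0, fun x ⟨ν, hν, hx⟩ => hx ▸ h1bar_nonneg hν⟩
    · exact ⟨0, ⟨by norm_num, by norm_num⟩, h1bar_zero⟩
  · apply le_csInf
    · exact ⟨h1bar 0, 0, ⟨by norm_num, by norm_num⟩, rfl⟩
    · rintro x ⟨ν, hν, hx⟩; exact hx ▸ h1bar_nonneg hν

lemma I2_ge : 1/108 ≤ sInf (h2bar '' Set.Ioo (-(1:ℝ)/6) (1/3)) := by
  apply le_csInf
  · exact ⟨h2bar 0, 0, ⟨by norm_num, by norm_num⟩, rfl⟩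
  · rintro x ⟨ν, hν, hx⟩; exact hx ▸ h2bar_ge hν

/-- In the four-point example there is a claim f_a whose entropic risk at maturity 1
differs from its entropic risk at maturity 2. -/
theorem stmt8 : ∃ a : ℝ, 0 < a ∧
    sSup {x : ℝ | ∃ ν ∈ Set.Ioo (-(1:ℝ)/6) (1/3), x = -a * (1/3 - ν) - h1 ν} ≠
      sSup {x : ℝ | ∃ ν ∈ Set.Ioo (-(1:ℝ)/6) (1/3), x = -a * (1/3 - ν) - h2 ν} := by
  refine ⟨500000, by norm_num, ?_⟩
  set m2 : ℝ := sInf (h2bar '' Set.Ioo (-(1:ℝ)/6) (1/3)) with hm2def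
  have hm2 : 1/108 ≤ m2 := I2_ge
  set S1 : Set ℝ := {x : ℝ | ∃ ν ∈ Set.Ioo (-(1:ℝ)/6) (1/3), x = -(500000:ℝ) * (1/3 - ν) - h1 ν}
    with hS1
  set S2 : Set ℝ := {x : ℝ | ∃ ν ∈ Set.Ioo (-(1:ℝ)/6) (1/3), x = -(500000:ℝ) * (1/3 - ν) - h2 ν}
    with hS2
  have hh1 : ∀ ν, h1 ν = h1bar ν := by
    intro ν; rw [h1, I1_eq_zero, sub_zero]
  -- upper bound for sSup S1
  have hS1ne : S1.Nonempty := ⟨-(500000:ℝ) * (1/3 - 0) - h1 0, 0, ⟨by norm_num, by norm_num⟩, rfl⟩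
  have hub1 : ∀ x ∈ S1, x ≤ 1/216 - Real.log 3 := by
    rintro x ⟨ν, hν, rfl⟩
    rw [hh1]
    obtain ⟨ha, hb⟩ := hν
    have hq : (0:ℝ) < 1/3 - ν := by linarith
    rcases lt_or_ge (1/3 - ν) (3/1000000) with h | h
    · have := h1bar_near ⟨ha, hb⟩ h
      nlinarith
    · have h0 := h1bar_nonneg ⟨ha, hb⟩
      have := log3_lt_3half
      nlinarith
  have hρ1 : sSup S1 ≤ 1/216 - Real.log 3 := csSup_le hS1ne hub1
  -- lower bound for sSup S2
  have hS2bdd : BddAbove S2 := by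
    refine ⟨m2, ?_⟩
    rintro x ⟨ν, hν, rfl⟩
    have hg := h2bar_ge hν
    have hq : (0:ℝ) < 1/3 - ν := by have := hν.2; linarith
    rw [h2, ← hm2def]
    nlinarith
  -- the witness point ν* = 1/3 - 1/250000000
  have hmemν : (1/3 - 1/250000000 : ℝ) ∈ Set.Ioo (-(1:ℝ)/6) (1/3) := by
    constructor <;> norm_num
  have hxmem : -(500000:ℝ) * (1/3 - (1/3 - 1/250000000)) - h2 (1/3 - 1/250000000) ∈ S2 :=
    ⟨1/3 - 1/250000000, hmemν, rfl⟩
  have hxval : 1/108 - Real.log 3 - 2000004/1000000000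
      ≤ -(500000:ℝ) * (1/3 - (1/3 - 1/250000000)) - h2 (1/3 - 1/250000000) := by
    have hub : h2bar (1/3 - 1/250000000) ≤ Real.log 3 + 1/250000000 := by
      rw [h2bar_formula hmemν]
      have hle := h1bar_le_log3 hmemν (by norm_num)
      have l98' : Real.log (9/8:ℝ) ≤ 1/8 := by
        have := Real.log_le_sub_one_of_pos (x := (9/8:ℝ)) (by norm_num); linarith
      have l98'' : (0:ℝ) ≤ Real.log (9/8) := Real.log_nonneg (by norm_num)
      nlinarith
    rw [h2, ← hm2def]
    nlinarith
  have hρ2 : 1/108 - Real.log 3 - 2000004/1000000000 ≤ sSup S2 :=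
    le_trans hxval (le_csSup hS2bdd hxmem)
  have : sSup S1 < sSup S2 := by
    calc sSup S1 ≤ 1/216 - Real.log 3 := hρ1
    _ < 1/108 - Real.log 3 - 2000004/1000000000 := by
      have h : (1:ℝ)/216 < 1/108 - 2000004/1000000000 := by norm_num
      linarith
    _ ≤ sSup S2 := hρ2
  exact ne_of_lt this
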